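/- arXiv:2203.10787 — 2 statements merged into one kernel-verified Lean document; each statement's English description precedes it below -/
import Mathlib

section
/- An increasing càdlàg function Λ : [0,∞) → [0,1] with Λ_{0-} = 0 is a solution of the elastic feedback problem if and only if it is a solution of the absorbing feedback problem with initial condition Z_{0-} = X_{0-} + ξ. -/
open MeasureTheory ProbabilityTheory Filter Topology Set

noncomputable section

/-- Running minimum of a path over the time interval `[0, t]`. -/
def runMin (Y : ℝ → ℝ) (t : ℝ) : ℝ := sInf (Y '' Set.Icc 0 t)

/-- The reflection term `L_t = max(0, - inf_{0 ≤ s ≤ t} Y_s)` of the Skorokhod problem. -/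
def reflTerm (Y : ℝ → ℝ) (t : ℝ) : ℝ := max 0 (-(runMin Y t))

/-- First time `t ≥ 0` at which `L_t ≥ x`, valued in `EReal` with `inf ∅ = ⊤`. -/
def hitTime (L : ℝ → ℝ) (x : ℝ) : EReal :=
  sInf ((fun t : ℝ => (t : EReal)) '' {t : ℝ | 0 ≤ t ∧ x ≤ L t})

/-- First time `t ≥ 0` at which `Y_t ≤ 0`, valued in `EReal` with `inf ∅ = ⊤`. -/
def hitZeroTime (Y : ℝ → ℝ) : EReal :=
  sInf ((fun t : ℝ => (t : EReal)) '' {t : ℝ | 0 ≤ t ∧ Y t ≤ 0})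

/-- An increasing càdlàg function `Λ : [0,∞) → [0,1]` with `Λ_{0-} = 0`, encoded as a
function on `ℝ` vanishing on negatives. -/
def IsLossFn (Λ : ℝ → ℝ) : Prop :=
  Monotone Λ ∧ (∀ t : ℝ, ContinuousWithinAt Λ (Set.Ici t) t) ∧
    (∀ t : ℝ, t < 0 → Λ t = 0) ∧ ∀ t : ℝ, Λ t ≤ 1

/-- A standard Brownian motion: starts at `0`, continuous paths, Gaussian increments
`N(0, t-s)`, and independent increments. -/
def IsStandardBM {Ω : Type*} [MeasurableSpace Ω] (P : Measure Ω) (B : ℝ → Ω → ℝ) : Prop :=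
  (∀ ω, B 0 ω = 0) ∧ (∀ ω, Continuous fun t => B t ω) ∧ (∀ t, Measurable (B t)) ∧
    (∀ s t : ℝ, 0 ≤ s → s ≤ t →
      Measure.map (fun ω => B t ω - B s ω) P = gaussianReal 0 (Real.toNNReal (t - s))) ∧
    ∀ (n : ℕ) (t : ℕ → ℝ), Monotone t → 0 ≤ t 0 →
      iIndepFun (fun (i : Fin n) ω => B (t (i + 1)) ω - B (t i) ω) P

/-- The elastic stopping time `τ = inf{t ≥ 0 : L_t ≥ ξ}` for the path `Y_s = X_{0-} + B_s − αΛ_s`. -/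
def elasticTau {Ω : Type*} (B : ℝ → Ω → ℝ) (X0 ξ : Ω → ℝ) (α : ℝ) (Λ : ℝ → ℝ) (ω : Ω) : EReal :=
  hitTime (reflTerm (fun s => X0 ω + B s ω - α * Λ s)) (ξ ω)

/-- `Λ` solves the elastic feedback problem: `Λ` is a loss function and `Λ_t = P(τ ≤ t)` for `t ≥ 0`. -/
def IsElasticSol {Ω : Type*} [MeasurableSpace Ω] (P : Measure Ω) (B : ℝ → Ω → ℝ)
    (X0 ξ : Ω → ℝ) (α : ℝ) (Λ : ℝ → ℝ) : Prop :=
  IsLossFn Λ ∧ ∀ t : ℝ, 0 ≤ t → Λ t = (P {ω | elasticTau B X0 ξ α Λ ω ≤ (t : EReal)}).toReal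

/-- The absorbing stopping time `τᵃ = inf{t ≥ 0 : Z_{0-} + B_t − αΛ_t ≤ 0}`. -/
def absorbTau {Ω : Type*} (B : ℝ → Ω → ℝ) (Z0 : Ω → ℝ) (α : ℝ) (Λ : ℝ → ℝ) (ω : Ω) : EReal :=
  hitZeroTime (fun s => Z0 ω + B s ω - α * Λ s)

/-- `Λ` solves the absorbing feedback problem with initial condition `Z0`. -/
def IsAbsorbingSol {Ω : Type*} [MeasurableSpace Ω] (P : Measure Ω) (B : ℝ → Ω → ℝ)
    (Z0 : Ω → ℝ) (α : ℝ) (Λ : ℝ → ℝ) : Prop :=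
  IsLossFn Λ ∧ ∀ t : ℝ, 0 ≤ t → Λ t = (P {ω | absorbTau B Z0 α Λ ω ≤ (t : EReal)}).toReal

/-- Physical solution of the elastic feedback problem: the jump condition
`ΔΛ_t = inf{x ≥ 0 : P(t < τ, 0 < X_{0-} + ξ + B_t − αΛ_{t−} < αx) < x}`. -/
def IsPhysicalElasticSol {Ω : Type*} [MeasurableSpace Ω] (P : Measure Ω) (B : ℝ → Ω → ℝ)
    (X0 ξ : Ω → ℝ) (α : ℝ) (Λ : ℝ → ℝ) : Prop :=
  IsElasticSol P B X0 ξ α Λ ∧ ∀ t : ℝ, 0 ≤ t →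
    Λ t - Function.leftLim Λ t =
      sInf {x : ℝ | 0 ≤ x ∧
        (P {ω | (t : EReal) < elasticTau B X0 ξ α Λ ω ∧
          0 < X0 ω + ξ ω + B t ω - α * Function.leftLim Λ t ∧
          X0 ω + ξ ω + B t ω - α * Function.leftLim Λ t < α * x}).toReal < x}

/-- `Λ` is the minimal solution of the elastic feedback problem. -/
def IsMinimalElasticSol {Ω : Type*} [MeasurableSpace Ω] (P : Measure Ω) (B : ℝ → Ω → ℝ)
    (X0 ξ : Ω → ℝ) (α : ℝ) (Λ : ℝ → ℝ) : Prop :=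
  IsElasticSol P B X0 ξ α Λ ∧
    ∀ Λ' : ℝ → ℝ, IsElasticSol P B X0 ξ α Λ' → ∀ t : ℝ, 0 ≤ t → Λ t ≤ Λ' t

/-- `ξ` is exponentially distributed with rate `κ`: `P(ξ > x) = e^{-κx}` for `x ≥ 0`. -/
def IsExponential {Ω : Type*} [MeasurableSpace Ω] (P : Measure Ω) (κ : ℝ) (ξ : Ω → ℝ) : Prop :=
  Measurable ξ ∧ ∀ x : ℝ, 0 ≤ x → P {ω | x < ξ ω} = ENNReal.ofReal (Real.exp (-κ * x))

/-- `X0` has a bounded density `f` which changes monotonicity at most finitely often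
on every compact interval. -/
def HasNiceDensity {Ω : Type*} [MeasurableSpace Ω] (P : Measure Ω) (X0 : Ω → ℝ) (f : ℝ → ℝ) : Prop :=
  (∀ x, 0 ≤ f x) ∧ (∃ C : ℝ, ∀ x, f x ≤ C) ∧ Measurable f ∧
    Measure.map X0 P = MeasureTheory.volume.withDensity (fun x => ENNReal.ofReal (f x)) ∧
    ∀ a b : ℝ, a ≤ b → ∃ (n : ℕ) (t : Fin (n + 1) → ℝ), Monotone t ∧ t 0 = a ∧ t (Fin.last n) = b ∧
      ∀ i : Fin n, MonotoneOn f (Set.Icc (t i.castSucc) (t i.succ)) ∨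
        AntitoneOn f (Set.Icc (t i.castSucc) (t i.succ))


/-- The Skorokhod reflection map at `0`: `Θ(Y)_t = Y_t + max(0, −inf_{0≤s≤t} Y_s)`. -/
def skorokhod (Y : ℝ → ℝ) (t : ℝ) : ℝ := Y t + reflTerm Y t

/-!
For `x > 0` one has `L_t ≥ x` iff `inf_{[0,t]} Y ≤ -x`, and since the path `Y` is lower
semicontinuous this infimum is attained, so it holds iff `Y + x` has reached `0` by time `t`.
Hence the elastic time for `ξ` and the absorption time of `Y + ξ` coincide on `{ξ > 0}`,
which has full probability; the two fixed-point conditions on `Λ` are then literally the same.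
-/

theorem Antitone.lowerSemicontinuous_of_continuousWithinAt_Ici {α β : Type*} [LinearOrder α]
    [TopologicalSpace α] [OrderTopology α] [LinearOrder β] [TopologicalSpace β]
    [OrderTopology β] {f : α → β} (hf : Antitone f)
    (hr : ∀ x, ContinuousWithinAt f (Ici x) x) : LowerSemicontinuous f := by
  intro x y hy
  rw [← nhdsLE_sup_nhdsGE, eventually_sup]
  exact ⟨eventually_nhdsWithin_of_forall fun s hs => hy.trans_le (hf hs),
    (hr x).eventually_const_lt hy⟩

theorem Continuous.lowerSemicontinuous_sub_mul {g Λ : ℝ → ℝ} (hg : Continuous g) {α : ℝ}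
    (hα : 0 ≤ α) (hΛ : Monotone Λ) (hΛr : ∀ t, ContinuousWithinAt Λ (Ici t) t) :
    LowerSemicontinuous fun s => g s - α * Λ s := by
  have hanti : Antitone fun s => -(α * Λ s) := fun a b hab =>
    neg_le_neg (mul_le_mul_of_nonneg_left (hΛ hab) hα)
  have hr : ∀ t, ContinuousWithinAt (fun s => -(α * Λ s)) (Ici t) t := fun t =>
    ((hΛr t).const_mul α).neg
  simpa only [sub_eq_add_neg] using
    hg.lowerSemicontinuous.add (hanti.lowerSemicontinuous_of_continuousWithinAt_Ici hr)

theorem runMin_le_iff {Y : ℝ → ℝ} (hY : LowerSemicontinuous Y) {t : ℝ} (ht : 0 ≤ t) (c : ℝ) :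
    runMin Y t ≤ c ↔ ∃ s ∈ Icc 0 t, Y s ≤ c := by
  obtain ⟨m, hm, hmin⟩ :=
    (hY.lowerSemicontinuousOn _).exists_isMinOn (nonempty_Icc.2 ht) isCompact_Icc
  have hrunMin : runMin Y t = Y m :=
    IsLeast.csInf_eq ⟨mem_image_of_mem Y hm, forall_mem_image.2 hmin⟩
  rw [hrunMin]
  exact ⟨fun h => ⟨m, hm, h⟩, fun ⟨s, hs, hYs⟩ => (hmin hs).trans hYs⟩

theorem le_reflTerm_iff {Y : ℝ → ℝ} (hY : LowerSemicontinuous Y) {t x : ℝ} (ht : 0 ≤ t)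
    (hx : 0 < x) : x ≤ reflTerm Y t ↔ ∃ s ∈ Icc 0 t, Y s + x ≤ 0 := by
  have hmax : x ≤ reflTerm Y t ↔ runMin Y t ≤ -x := by
    rw [reflTerm, le_max_iff]
    constructor
    · rintro (h | h) <;> linarith
    · intro h
      exact Or.inr (by linarith)
  simp only [hmax, runMin_le_iff hY ht, ← le_neg_iff_add_nonpos_right]

theorem hitZeroTime_le {Y : ℝ → ℝ} {s : ℝ} (hs : 0 ≤ s) (hYs : Y s ≤ 0) :
    hitZeroTime Y ≤ s :=
  sInf_le (mem_image_of_mem _ (show s ∈ {t : ℝ | 0 ≤ t ∧ Y t ≤ 0} from ⟨hs, hYs⟩))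

theorem hitTime_reflTerm_eq_hitZeroTime {Y : ℝ → ℝ} (hY : LowerSemicontinuous Y) {x : ℝ}
    (hx : 0 < x) : hitTime (reflTerm Y) x = hitZeroTime fun s => Y s + x := by
  refine le_antisymm (sInf_le_sInf (image_mono fun s ⟨hs0, hs⟩ => ?_)) ?_
  · exact ⟨hs0, (le_reflTerm_iff hY hs0 hx).2 ⟨s, ⟨hs0, le_rfl⟩, hs⟩⟩
  · refine le_sInf (forall_mem_image.2 fun s ⟨hs0, hs⟩ => ?_)
    obtain ⟨u, hu, hYu⟩ := (le_reflTerm_iff hY hs0 hx).1 hs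
    exact (hitZeroTime_le hu.1 hYu).trans (EReal.coe_le_coe_iff.2 hu.2)

theorem elasticTau_eq_absorbTau {Ω : Type*} {B : ℝ → Ω → ℝ} {X0 ξ : Ω → ℝ} {α : ℝ}
    {Λ : ℝ → ℝ} {ω : Ω} (hY : LowerSemicontinuous fun s => X0 ω + B s ω - α * Λ s)
    (hξ : 0 < ξ ω) :
    elasticTau B X0 ξ α Λ ω = absorbTau B (fun ω => X0 ω + ξ ω) α Λ ω := by
  rw [elasticTau, absorbTau, hitTime_reflTerm_eq_hitZeroTime hY hξ]
  congr 1
  funext s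
  ring

theorem IsExponential.ae_pos {Ω : Type*} [MeasurableSpace Ω] {P : Measure Ω}
    [IsProbabilityMeasure P] {κ : ℝ} {ξ : Ω → ℝ} (hξ : IsExponential P κ ξ) :
    ∀ᵐ ω ∂P, 0 < ξ ω := by
  have hpos : P {ω | 0 < ξ ω} = 1 := by simpa using hξ.2 0 le_rfl
  exact (prob_compl_eq_zero_iff (measurableSet_lt measurable_const hξ.1)).2 hpos

theorem statement_3_general {Ω : Type*} [MeasurableSpace Ω] (P : Measure Ω) [IsProbabilityMeasure P]
    (α κ : ℝ) (hα : 0 < α)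
    (B : ℝ → Ω → ℝ) (X0 ξ : Ω → ℝ)
    (hB : IsStandardBM P B)
    (hξ : IsExponential P κ ξ)
    (Λ : ℝ → ℝ) (hΛ : IsLossFn Λ) :
    IsElasticSol P B X0 ξ α Λ ↔ IsAbsorbingSol P B (fun ω => X0 ω + ξ ω) α Λ := by
  have hpath : ∀ ω, LowerSemicontinuous fun s => X0 ω + B s ω - α * Λ s := fun ω =>
    (continuous_const.add (hB.2.1 ω)).lowerSemicontinuous_sub_mul hα.le hΛ.1 hΛ.2.1
  have hτ : elasticTau B X0 ξ α Λ =ᵐ[P] absorbTau B (fun ω => X0 ω + ξ ω) α Λ :=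
    hξ.ae_pos.mono fun ω hω => elasticTau_eq_absorbTau (hpath ω) hω
  have hevents : ∀ t : ℝ, P {ω | elasticTau B X0 ξ α Λ ω ≤ (t : EReal)} =
      P {ω | absorbTau B (fun ω => X0 ω + ξ ω) α Λ ω ≤ (t : EReal)} := fun t =>
    measure_congr (hτ.fun_comp (· ≤ (t : EReal)))
  simp only [IsElasticSol, IsAbsorbingSol, hevents]

/-- an increasing càdlàg `Λ : [0,∞) → [0,1]` with `Λ_{0-} = 0` solves the
elastic feedback problem if and only if it solves the absorbing feedback problem with
initial condition `Z_{0-} = X_{0-} + ξ`. -/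
theorem statement_3 {Ω : Type*} [MeasurableSpace Ω] (P : Measure Ω) [IsProbabilityMeasure P]
    (α κ : ℝ) (hα : 0 < α) (hκ : 0 < κ)
    (B : ℝ → Ω → ℝ) (X0 ξ : Ω → ℝ)
    (hB : IsStandardBM P B)
    (hX0meas : Measurable X0) (hX0nonneg : ∀ ω, 0 ≤ X0 ω)
    (hξ : IsExponential P κ ξ)
    (hindepX0ξ : IndepFun X0 ξ P)
    (hindepB : IndepFun (fun ω => (X0 ω, ξ ω)) (fun ω => fun t => B t ω) P)
    (Λ : ℝ → ℝ) (hΛ : IsLossFn Λ) :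
    IsElasticSol P B X0 ξ α Λ ↔ IsAbsorbingSol P B (fun ω => X0 ω + ξ ω) α Λ :=
  statement_3_general P α κ hα B X0 ξ hB hξ Λ hΛ

end
end

section
/- For 0 < κ₁ < κ₂, let Λ^{κ₁} and Λ^{κ₂} denote the minimal solutions of the elastic feedback problem with parameters κ₁ and κ₂ respectively (same α and same initial condition X_{0-}). Then Λ^{κ₁}_t ≤ Λ^{κ₂}_t for all t ≥ 0. -/
open MeasureTheory ProbabilityTheory Filter Topology Set

noncomputable section

/-! The rate-`κ` problem is a fixed-point problem `Λ = Γ_κ Λ` with `Γ_κ(Λ)_t = P(τ^κ ≤ t)`,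
and `Γ_κ` is monotone in `Λ` (a larger loss pushes the path down, so `L` grows and `τ^κ`
comes earlier). By a Knaster–Tarski argument, below every supersolution `Γ_κ Λ₀ ≤ Λ₀` lies a
solution, namely the infimum of all supersolutions; hence the minimal solution lies below every
supersolution. For fixed `Λ`, the event `{τ^κ ≤ t}` is `{ξ^κ ≤ L_t}` with `L_t ≥ 0` a functional
of `(X_{0-}, B)` independent of `ξ^κ`, and `ξ^{κ₂}` is stochastically smaller than `ξ^{κ₁}`;
so `Γ_{κ₁} Λ^{κ₂} ≤ Γ_{κ₂} Λ^{κ₂} = Λ^{κ₂}`, i.e. `Λ^{κ₂}` is a supersolution for `κ₁`. -/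

section RunningMinimum

variable {Y Y' : ℝ → ℝ} {s t : ℝ}

lemma runMin_of_neg (ht : t < 0) : runMin Y t = 0 := by
  rw [runMin, Icc_eq_empty (by linarith), image_empty, Real.sInf_empty]

lemma reflTerm_of_neg (ht : t < 0) : reflTerm Y t = 0 := by
  rw [reflTerm, runMin_of_neg ht, neg_zero, max_self]

lemma reflTerm_nonneg (Y : ℝ → ℝ) (t : ℝ) : 0 ≤ reflTerm Y t := le_max_left _ _

lemma runMin_le (hY : BddBelow (Y '' Icc 0 t)) (hs : s ∈ Icc 0 t) : runMin Y t ≤ Y s :=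
  csInf_le hY (mem_image_of_mem Y hs)

lemma le_runMin {a : ℝ} (ht : 0 ≤ t) (h : ∀ s ∈ Icc 0 t, a ≤ Y s) : a ≤ runMin Y t :=
  le_csInf ((nonempty_Icc.2 ht).image Y) (forall_mem_image.2 h)

lemma runMin_anti (hY : BddBelow (Y '' Icc 0 t)) (hs : 0 ≤ s) (hst : s ≤ t) :
    runMin Y t ≤ runMin Y s :=
  le_runMin hs fun _ hu => runMin_le hY ⟨hu.1, hu.2.trans hst⟩

lemma reflTerm_mono (hY : ∀ t, BddBelow (Y '' Icc 0 t)) : Monotone (reflTerm Y) := by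
  intro s t hst
  rcases lt_or_ge s 0 with hs | hs
  · rw [reflTerm_of_neg hs]
    exact reflTerm_nonneg Y t
  · exact max_le_max le_rfl (neg_le_neg (runMin_anti (hY t) hs hst))

lemma reflTerm_le_reflTerm_of_le (hY' : BddBelow (Y' '' Icc 0 t)) (hle : Y' ≤ Y) :
    reflTerm Y t ≤ reflTerm Y' t := by
  rcases lt_or_ge t 0 with ht | ht
  · rw [reflTerm_of_neg ht]
    exact reflTerm_nonneg Y' t
  · exact max_le_max le_rfl
      (neg_le_neg (le_runMin ht fun s hs => (runMin_le hY' hs).trans (hle s)))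

lemma continuousWithinAt_runMin (hY : ∀ t, BddBelow (Y '' Icc 0 t))
    (hrc : ContinuousWithinAt Y (Ici t) t) (ht : 0 ≤ t) :
    ContinuousWithinAt (runMin Y) (Ici t) t := by
  refine tendsto_order.2 ⟨fun a ha => ?_, fun a ha => ?_⟩
  · obtain ⟨a', haa', ha'⟩ := exists_between ha
    have hYt : a' < Y t := ha'.trans_le (runMin_le (hY t) ⟨ht, le_rfl⟩)
    obtain ⟨u, htu, hu⟩ :=
      mem_nhdsGE_iff_exists_Ico_subset.1 (hrc.eventually (lt_mem_nhds hYt))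
    filter_upwards [Ico_mem_nhdsGE htu] with x hx
    refine haa'.trans_le (le_runMin (ht.trans hx.1) fun s hs => ?_)
    rcases le_or_gt s t with hst | hts
    · exact ha'.le.trans (runMin_le (hY t) ⟨hs.1, hst⟩)
    · exact (hu ⟨hts.le, hs.2.trans_lt hx.2⟩).le
  · filter_upwards [self_mem_nhdsWithin] with x hx
    exact (runMin_anti (hY x) ht hx).trans_lt ha

lemma continuousWithinAt_reflTerm (hY : ∀ t, BddBelow (Y '' Icc 0 t))
    (hrc : ContinuousWithinAt Y (Ici t) t) (ht : 0 ≤ t) :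
    ContinuousWithinAt (reflTerm Y) (Ici t) t :=
  (continuous_const.max continuous_neg).continuousAt.comp_continuousWithinAt
    (continuousWithinAt_runMin hY hrc ht)

/-- On right-continuous paths the running minimum over `[0, t]` is the infimum over this countable
set, which makes the reflection term a measurable functional of the path. -/
def ratIcc (t : ℝ) : Set ℝ := insert t (Icc 0 t ∩ range ((↑) : ℚ → ℝ))

lemma countable_ratIcc (t : ℝ) : (ratIcc t).Countable :=
  ((countable_range _).mono inter_subset_right).insert t

lemma ratIcc_subset (ht : 0 ≤ t) : ratIcc t ⊆ Icc 0 t :=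
  insert_subset ⟨ht, le_rfl⟩ inter_subset_left

lemma runMin_eq_iInf_ratIcc (hY : BddBelow (Y '' Icc 0 t))
    (hrc : ∀ s, ContinuousWithinAt Y (Ici s) s) (ht : 0 ≤ t) :
    runMin Y t = ⨅ s : ratIcc t, Y s := by
  have hbdd : BddBelow (range fun s : ratIcc t => Y s) := by
    rw [← image_eq_range]
    exact hY.mono (image_mono (ratIcc_subset ht))
  have : Nonempty (ratIcc t) := ⟨⟨t, mem_insert t _⟩⟩
  refine le_antisymm (le_ciInf fun s => runMin_le hY (ratIcc_subset ht s.2))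
    (le_runMin ht fun s hs => ?_)
  rcases hs.2.eq_or_lt with rfl | hst
  · exact ciInf_le hbdd ⟨s, mem_insert s _⟩
  have hs_mem : s ∈ closure (Ioo s t ∩ range ((↑) : ℚ → ℝ)) := by
    rw [← closure_closure]
    refine closure_mono (Rat.denseRange_cast.open_subset_closure_inter isOpen_Ioo) ?_
    rw [closure_Ioo hst.ne]
    exact left_mem_Icc.2 hst.le
  refine closure_minimal ?_ isClosed_Ici
    (((hrc s).mono fun u hu => hu.1.1.le).mem_closure_image hs_mem)
  rintro _ ⟨u, ⟨hu, q, rfl⟩, rfl⟩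
  exact ciInf_le hbdd ⟨q, mem_insert_of_mem _ ⟨⟨hs.1.trans hu.1.le, hu.2.le⟩, q, rfl⟩⟩

end RunningMinimum

section HittingTime

variable {L L' : ℝ → ℝ} {t x : ℝ}

lemma hitTime_nonneg (L : ℝ → ℝ) (x : ℝ) : 0 ≤ hitTime L x :=
  le_sInf <| forall_mem_image.2 fun _ hs => EReal.coe_nonneg.2 hs.1

lemma hitTime_le_iff (hL : Monotone L) (hrc : ContinuousWithinAt L (Ici t) t) (ht : 0 ≤ t) :
    hitTime L x ≤ t ↔ x ≤ L t := by
  refine ⟨fun h => ?_, fun h => sInf_le ⟨t, ⟨ht, h⟩, rfl⟩⟩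
  by_contra! hLt
  obtain ⟨u, htu, hu⟩ :=
    mem_nhdsGE_iff_exists_Ico_subset.1 (hrc.eventually (gt_mem_nhds hLt))
  have hu_le : (u : EReal) ≤ hitTime L x := by
    refine le_sInf <| forall_mem_image.2 fun s hs => ?_
    by_contra! hsu
    rw [EReal.coe_lt_coe_iff] at hsu
    rcases le_or_gt s t with hst | hts
    · exact ((hL hst).trans_lt hLt).not_ge hs.2
    · exact (hu ⟨hts.le, hsu⟩).not_ge hs.2
  exact (EReal.coe_lt_coe_iff.2 htu).not_ge (hu_le.trans h)

lemma hitTime_le_hitTime (h : L ≤ L') (x : ℝ) : hitTime L' x ≤ hitTime L x :=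
  sInf_le_sInf <| image_mono fun _ hs => ⟨hs.1, hs.2.trans (h _)⟩

end HittingTime

section FeedbackPath

variable {c α t : ℝ} {b Λ : ℝ → ℝ}

lemma bddBelow_feedbackPath (hb : Continuous b) (hα : 0 ≤ α) (hΛ : Monotone Λ) (t : ℝ) :
    BddBelow ((fun s => c + b s - α * Λ s) '' Icc 0 t) := by
  obtain ⟨m, hm⟩ := (isCompact_Icc (a := 0) (b := t)).bddBelow_image hb.continuousOn
  refine ⟨c + m - α * Λ t, forall_mem_image.2 fun s hs => ?_⟩
  have hbs := hm (mem_image_of_mem b hs)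
  have hΛs := mul_le_mul_of_nonneg_left (hΛ hs.2) hα
  linarith

lemma continuousWithinAt_feedbackPath (hb : Continuous b)
    (hΛ : ContinuousWithinAt Λ (Ici t) t) :
    ContinuousWithinAt (fun s => c + b s - α * Λ s) (Ici t) t :=
  (continuousWithinAt_const.add hb.continuousWithinAt).sub (continuousWithinAt_const.mul hΛ)

def reflFunctional (α : ℝ) (Λ : ℝ → ℝ) (t : ℝ) (p : ℝ × (ℝ → ℝ)) : ℝ :=
  max 0 (-⨅ s : ratIcc t, (p.1 + p.2 s - α * Λ s))

lemma measurable_reflFunctional (α : ℝ) (Λ : ℝ → ℝ) (t : ℝ) :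
    Measurable (reflFunctional α Λ t) := by
  have := (countable_ratIcc t).to_subtype
  exact measurable_const.max (Measurable.iInf fun s => by fun_prop).neg

lemma hitTime_feedbackPath_le_iff (hb : Continuous b) (hα : 0 ≤ α) (hΛ : IsLossFn Λ)
    (ht : 0 ≤ t) (x : ℝ) :
    hitTime (reflTerm fun s => c + b s - α * Λ s) x ≤ t ↔ x ≤ reflFunctional α Λ t (c, b) := by
  have hbdd := bddBelow_feedbackPath (c := c) hb hα hΛ.1
  have hrc : ∀ s, ContinuousWithinAt (fun s => c + b s - α * Λ s) (Ici s) s :=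
    fun s => continuousWithinAt_feedbackPath hb (hΛ.2.1 s)
  rw [hitTime_le_iff (reflTerm_mono hbdd) (continuousWithinAt_reflTerm hbdd (hrc t) ht) ht,
    reflTerm, runMin_eq_iInf_ratIcc (hbdd t) hrc ht]
  rfl

end FeedbackPath

section Probability

variable {Ω β γ δ : Type*} [MeasurableSpace Ω] {mβ : MeasurableSpace β}
  {mγ : MeasurableSpace γ} {mδ : MeasurableSpace δ} {μ : Measure Ω}

lemma ProbabilityTheory.IndepFun.indepFun_prodMk_of_indepFun_prodMk
    [IsZeroOrProbabilityMeasure μ] {X : Ω → β} {Y : Ω → γ} {Z : Ω → δ}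
    (hXY : IndepFun X Y μ) (hX : Measurable X) (hY : Measurable Y) (hZ : Measurable Z)
    (hXYZ : IndepFun (fun ω => (X ω, Y ω)) Z μ) :
    IndepFun Y (fun ω => (X ω, Z ω)) μ := by
  refine IndepSets.indep hY.comap_le (hX.prodMk hZ).comap_le
    (@MeasurableSpace.isPiSystem_measurableSet Ω (mγ.comap Y)) (isPiSystem_prod.comap _)
    (@MeasurableSpace.generateFrom_measurableSet Ω (mγ.comap Y)).symm
    (by rw [← generateFrom_prod, MeasurableSpace.comap_generateFrom]; rfl) ?_
  rw [IndepSets_iff]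
  rintro _ _ ⟨s, hs, rfl⟩ ⟨_, ⟨u, hu, v, hv, rfl⟩, rfl⟩
  have hXYZ' := indepFun_iff_measure_inter_preimage_eq_mul.1 hXYZ
  have h_joint := hXYZ' (u ×ˢ s) v (hu.prod hs) hv
  have h_XZ := hXYZ' (u ×ˢ univ) v (hu.prod MeasurableSet.univ) hv
  have h_XY := indepFun_iff_measure_inter_preimage_eq_mul.1 hXY u s hu hs
  simp only [mk_preimage_prod, preimage_univ, inter_univ] at h_joint h_XZ ⊢
  rw [show Y ⁻¹' s ∩ (X ⁻¹' u ∩ Z ⁻¹' v) = X ⁻¹' u ∩ Y ⁻¹' s ∩ Z ⁻¹' v by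
    rw [← inter_assoc, inter_comm (Y ⁻¹' s)], h_joint, h_XY, h_XZ]
  ring

lemma measure_le_le_of_tail_le [IsProbabilityMeasure μ] {ξ ξ' L : Ω → ℝ}
    (hξ : Measurable ξ) (hξ' : Measurable ξ') (hL : Measurable L) (hL0 : ∀ ω, 0 ≤ L ω)
    (hξL : IndepFun ξ L μ) (hξ'L : IndepFun ξ' L μ)
    (htail : ∀ x, 0 ≤ x → μ {ω | x < ξ' ω} ≤ μ {ω | x < ξ ω}) :
    μ {ω | ξ ω ≤ L ω} ≤ μ {ω | ξ' ω ≤ L ω} := by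
  have hmeas : MeasurableSet {p : ℝ × ℝ | p.2 ≤ p.1} :=
    measurableSet_le measurable_snd measurable_fst
  have h_integral : ∀ ζ : Ω → ℝ, Measurable ζ → IndepFun ζ L μ →
      μ {ω | ζ ω ≤ L ω} = ∫⁻ l, μ {ω | ζ ω ≤ l} ∂(μ.map L) := by
    intro ζ hζ hζL
    rw [show {ω | ζ ω ≤ L ω} = (fun ω => (L ω, ζ ω)) ⁻¹' {p | p.2 ≤ p.1} from rfl,
      ← Measure.map_apply (hL.prodMk hζ) hmeas,
      (indepFun_iff_map_prod_eq_prod_map_map hL.aemeasurable hζ.aemeasurable).1 hζL.symm,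
      Measure.prod_apply hmeas]
    exact lintegral_congr fun l => Measure.map_apply hζ measurableSet_Iic
  have h_cdf : ∀ ζ : Ω → ℝ, Measurable ζ → ∀ l,
      μ {ω | ζ ω ≤ l} = 1 - μ {ω | l < ζ ω} := fun ζ hζ l => by
    rw [← prob_compl_eq_one_sub (measurableSet_lt measurable_const hζ)]
    simp only [compl_ofPred, not_lt]
  rw [h_integral ξ hξ hξL, h_integral ξ' hξ' hξ'L]
  refine lintegral_mono_ae ?_
  filter_upwards [(ae_map_iff hL.aemeasurable measurableSet_Ici).2 (ae_of_all _ hL0)]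
    with l hl
  rw [h_cdf ξ hξ, h_cdf ξ' hξ']
  exact tsub_le_tsub_left (htail l hl) 1

lemma IsExponential.measure_lt_le {P : Measure Ω} {κ₁ κ₂ : ℝ} {ξ₁ ξ₂ : Ω → ℝ}
    (hξ₁ : IsExponential P κ₁ ξ₁) (hξ₂ : IsExponential P κ₂ ξ₂) (hκ : κ₁ ≤ κ₂) {x : ℝ}
    (hx : 0 ≤ x) : P {ω | x < ξ₂ ω} ≤ P {ω | x < ξ₁ ω} := by
  rw [hξ₁.2 x hx, hξ₂.2 x hx]
  exact ENNReal.ofReal_le_ofReal (Real.exp_le_exp.2 (by nlinarith))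

variable [IsProbabilityMeasure μ] {τ : Ω → EReal}

lemma continuousWithinAt_measure_le (hτ : ∀ r : ℝ, MeasurableSet {ω | τ ω ≤ r}) (t : ℝ) :
    ContinuousWithinAt (fun r : ℝ => (μ {ω | τ ω ≤ r}).toReal) (Ici t) t := by
  rw [← continuousWithinAt_Ioi_iff_Ici]
  have h := tendsto_measure_biInter_gt (μ := μ) (s := fun r : ℝ => {ω | τ ω ≤ r}) (a := t)
    (fun r _ => (hτ r).nullMeasurableSet)
    (fun _ _ _ hij _ hω => hω.trans (EReal.coe_le_coe_iff.2 hij))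
    ⟨t + 1, by linarith, measure_ne_top _ _⟩
  have h_inter : ⋂ r > t, {ω | τ ω ≤ r} = {ω | τ ω ≤ t} := by
    ext ω
    simp only [mem_iInter, mem_ofPred_eq, gt_iff_lt]
    rw [← EReal.le_of_forall_lt_iff_le]
    simp only [EReal.coe_lt_coe_iff]
  rw [h_inter] at h
  exact (ENNReal.tendsto_toReal (measure_ne_top _ _)).comp h

lemma isLossFn_measure_le (hτ0 : ∀ ω, 0 ≤ τ ω) (hτ : ∀ r : ℝ, MeasurableSet {ω | τ ω ≤ r}) :
    IsLossFn fun r : ℝ => (μ {ω | τ ω ≤ r}).toReal := by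
  refine ⟨fun s t hst => ?_, continuousWithinAt_measure_le hτ, fun t ht => ?_,
    fun t => ENNReal.toReal_le_of_le_ofReal zero_le_one (by simpa using prob_le_one)⟩
  · exact ENNReal.toReal_mono (measure_ne_top _ _)
      (measure_mono fun ω hω => hω.trans (EReal.coe_le_coe_iff.2 hst))
  · have h_empty : {ω | τ ω ≤ t} = ∅ := eq_empty_of_forall_notMem fun ω hω =>
      (EReal.coe_lt_coe_iff.2 ht).not_ge ((hτ0 ω).trans hω)
    simp [h_empty]

end Probability

/-- The map `Γ` whose fixed points on `[0, ∞)` are the solutions of the elastic problem. -/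
def elasticFeedbackMap {Ω : Type*} [MeasurableSpace Ω] (P : Measure Ω) (B : ℝ → Ω → ℝ)
    (X0 ξ : Ω → ℝ) (α : ℝ) (Λ : ℝ → ℝ) (t : ℝ) : ℝ :=
  (P {ω | elasticTau B X0 ξ α Λ ω ≤ t}).toReal

section FeedbackMap

variable {Ω : Type*} {B : ℝ → Ω → ℝ} {X0 ξ : Ω → ℝ} {α : ℝ} {Λ : ℝ → ℝ}

lemma setOf_elasticTau_le (hB : ∀ ω, Continuous fun s => B s ω) (hα : 0 ≤ α)
    (hΛ : IsLossFn Λ) {t : ℝ} (ht : 0 ≤ t) :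
    {ω | elasticTau B X0 ξ α Λ ω ≤ t} =
      {ω | ξ ω ≤ reflFunctional α Λ t (X0 ω, fun s => B s ω)} := by
  ext ω
  exact hitTime_feedbackPath_le_iff (hB ω) hα hΛ ht (ξ ω)

variable [MeasurableSpace Ω] {P : Measure Ω}

lemma measurable_reflFunctional_comp (hX0 : Measurable X0) (hBmeas : ∀ t, Measurable (B t))
    (α : ℝ) (Λ : ℝ → ℝ) (t : ℝ) :
    Measurable fun ω => reflFunctional α Λ t (X0 ω, fun s => B s ω) :=
  (measurable_reflFunctional α Λ t).comp (hX0.prodMk (measurable_pi_lambda _ hBmeas))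

lemma measurableSet_setOf_elasticTau_le (hB : ∀ ω, Continuous fun s => B s ω)
    (hBmeas : ∀ t, Measurable (B t)) (hX0 : Measurable X0) (hξ : Measurable ξ) (hα : 0 ≤ α)
    (hΛ : IsLossFn Λ) (t : ℝ) :
    MeasurableSet {ω | elasticTau B X0 ξ α Λ ω ≤ t} := by
  rcases lt_or_ge t 0 with ht | ht
  · convert MeasurableSet.empty
    exact eq_empty_of_forall_notMem fun ω hω =>
      (EReal.coe_lt_coe_iff.2 ht).not_ge ((hitTime_nonneg _ _).trans hω)
  · rw [setOf_elasticTau_le hB hα hΛ ht]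
    exact measurableSet_le hξ (measurable_reflFunctional_comp hX0 hBmeas α Λ t)

lemma isLossFn_elasticFeedbackMap [IsProbabilityMeasure P]
    (hB : ∀ ω, Continuous fun s => B s ω) (hBmeas : ∀ t, Measurable (B t))
    (hX0 : Measurable X0) (hξ : Measurable ξ) (hα : 0 ≤ α) (hΛ : IsLossFn Λ) :
    IsLossFn (elasticFeedbackMap P B X0 ξ α Λ) :=
  isLossFn_measure_le (fun _ => hitTime_nonneg _ _)
    (measurableSet_setOf_elasticTau_le hB hBmeas hX0 hξ hα hΛ)

lemma elasticFeedbackMap_mono [IsFiniteMeasure P] (hB : ∀ ω, Continuous fun s => B s ω)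
    (hα : 0 ≤ α) {Λ' : ℝ → ℝ} (hΛ' : Monotone Λ') (hle : Λ ≤ Λ') :
    elasticFeedbackMap P B X0 ξ α Λ ≤ elasticFeedbackMap P B X0 ξ α Λ' := fun t =>
  ENNReal.toReal_mono (measure_ne_top _ _) <| measure_mono fun ω hω =>
    (hitTime_le_hitTime (fun s => reflTerm_le_reflTerm_of_le
      (bddBelow_feedbackPath (hB ω) hα hΛ' s)
      (fun u => by linarith [mul_le_mul_of_nonneg_left (hle u) hα])) _).trans hω

lemma elasticFeedbackMap_le_of_tail_le [IsProbabilityMeasure P]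
    (hB : ∀ ω, Continuous fun s => B s ω) (hBmeas : ∀ t, Measurable (B t))
    (hX0 : Measurable X0) (hα : 0 ≤ α) (hΛ : IsLossFn Λ) {ξ' : Ω → ℝ}
    (hξ : Measurable ξ) (hξ' : Measurable ξ')
    (hind : IndepFun ξ (fun ω => (X0 ω, fun s => B s ω)) P)
    (hind' : IndepFun ξ' (fun ω => (X0 ω, fun s => B s ω)) P)
    (htail : ∀ x, 0 ≤ x → P {ω | x < ξ' ω} ≤ P {ω | x < ξ ω}) {t : ℝ} (ht : 0 ≤ t) :
    elasticFeedbackMap P B X0 ξ α Λ t ≤ elasticFeedbackMap P B X0 ξ' α Λ t := by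
  unfold elasticFeedbackMap
  rw [setOf_elasticTau_le hB hα hΛ ht, setOf_elasticTau_le hB hα hΛ ht]
  refine ENNReal.toReal_mono (measure_ne_top _ _) (measure_le_le_of_tail_le hξ hξ'
    (measurable_reflFunctional_comp hX0 hBmeas α Λ t) (fun _ => le_max_left _ _) ?_ ?_ htail)
  · exact hind.comp measurable_id (measurable_reflFunctional α Λ t)
  · exact hind'.comp measurable_id (measurable_reflFunctional α Λ t)

end FeedbackMap

section FixedPoint

lemma IsLossFn.nonneg {Λ : ℝ → ℝ} (hΛ : IsLossFn Λ) (t : ℝ) : 0 ≤ Λ t := by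
  rcases lt_or_ge t 0 with ht | ht
  · rw [hΛ.2.2.1 t ht]
  · rw [← hΛ.2.2.1 (-1) (by norm_num)]
    exact hΛ.1 (by linarith)

lemma IsLossFn.iInf {ι : Type*} [Nonempty ι] {F : ι → ℝ → ℝ} (hF : ∀ i, IsLossFn (F i)) :
    IsLossFn fun t => ⨅ i, F i t := by
  have hbdd : ∀ t, BddBelow (range fun i => F i t) :=
    fun t => ⟨0, forall_mem_range.2 fun i => (hF i).nonneg t⟩
  obtain ⟨i⟩ := ‹Nonempty ι›
  have hmono : Monotone fun t => ⨅ i, F i t :=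
    fun s t hst => ciInf_mono (hbdd s) fun i => (hF i).1 hst
  refine ⟨hmono, fun t => ?_, fun t ht => ?_, fun t => ciInf_le_of_le (hbdd t) i ((hF i).2.2.2 t)⟩
  · refine continuousWithinAt_iff_lower_upperSemicontinuousWithinAt.2 ⟨?_, ?_⟩
    · exact fun y hy => eventually_nhdsWithin_of_forall fun x hx => hy.trans_le (hmono hx)
    · exact upperSemicontinuousWithinAt_ciInf (Eventually.of_forall fun _ => hbdd _)
        fun i => ((hF i).2.1 t).upperSemicontinuousWithinAt
  · exact le_antisymm (ciInf_le_of_le (hbdd t) i ((hF i).2.2.1 t ht).le)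
      (le_ciInf fun i => (hF i).nonneg t)

theorem exists_isLossFn_fixedPoint_le {Γ : (ℝ → ℝ) → ℝ → ℝ}
    (hmono : ∀ Λ Λ', IsLossFn Λ' → Λ ≤ Λ' → Γ Λ ≤ Γ Λ')
    (hloss : ∀ Λ, IsLossFn Λ → IsLossFn (Γ Λ))
    {Λ₀ : ℝ → ℝ} (hΛ₀ : IsLossFn Λ₀) (hsuper : ∀ t, 0 ≤ t → Γ Λ₀ t ≤ Λ₀ t) :
    ∃ Λ, IsLossFn Λ ∧ (∀ t, 0 ≤ t → Λ t = Γ Λ t) ∧ Λ ≤ Λ₀ := by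
  set S := {Λ | IsLossFn Λ ∧ ∀ t, 0 ≤ t → Γ Λ t ≤ Λ t}
  have : Nonempty S := ⟨⟨Λ₀, hΛ₀, hsuper⟩⟩
  set Λs : ℝ → ℝ := fun t => ⨅ Λ : S, (Λ : ℝ → ℝ) t
  have hΛs : IsLossFn Λs := IsLossFn.iInf fun Λ => Λ.2.1
  have hle : ∀ Λ ∈ S, Λs ≤ Λ := fun Λ hΛ t =>
    ciInf_le ⟨0, forall_mem_range.2 fun Λ : S => Λ.2.1.nonneg t⟩ (⟨Λ, hΛ⟩ : S)
  have hsub : Γ Λs ≤ Λs := fun t => by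
    rcases lt_or_ge t 0 with ht | ht
    · rw [(hloss Λs hΛs).2.2.1 t ht]
      exact hΛs.nonneg t
    · exact le_ciInf fun Λ => (hmono Λs Λ Λ.2.1 (hle Λ Λ.2) t).trans (Λ.2.2 t ht)
  have hmem : Γ Λs ∈ S := ⟨hloss Λs hΛs, fun t _ => hmono _ _ hΛs hsub t⟩
  exact ⟨Λs, hΛs, fun t _ => le_antisymm (hle _ hmem t) (hsub t), hle Λ₀ ⟨hΛ₀, hsuper⟩⟩

end FixedPoint

theorem statement_11_general {Ω : Type*} [MeasurableSpace Ω] (P : Measure Ω) [IsProbabilityMeasure P]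
    (α κ₁ κ₂ : ℝ) (hα : 0 < α) (hκ₁₂ : κ₁ < κ₂)
    (B : ℝ → Ω → ℝ) (X0 ξ₁ ξ₂ : Ω → ℝ)
    (hB : IsStandardBM P B)
    (hX0meas : Measurable X0)
    (hξ₁ : IsExponential P κ₁ ξ₁) (hξ₂ : IsExponential P κ₂ ξ₂)
    (hindepX0ξ₁ : IndepFun X0 ξ₁ P) (hindepX0ξ₂ : IndepFun X0 ξ₂ P)
    (hindepB₁ : IndepFun (fun ω => (X0 ω, ξ₁ ω)) (fun ω => fun t => B t ω) P)
    (hindepB₂ : IndepFun (fun ω => (X0 ω, ξ₂ ω)) (fun ω => fun t => B t ω) P)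
    (Λ₁ Λ₂ : ℝ → ℝ)
    (h₁ : IsMinimalElasticSol P B X0 ξ₁ α Λ₁)
    (h₂ : IsMinimalElasticSol P B X0 ξ₂ α Λ₂) :
    ∀ t : ℝ, 0 ≤ t → Λ₁ t ≤ Λ₂ t := by
  obtain ⟨-, hBcont, hBmeas, -, -⟩ := hB
  have hBpath : Measurable fun ω => fun t => B t ω := measurable_pi_lambda _ hBmeas
  have hsuper : ∀ t, 0 ≤ t → elasticFeedbackMap P B X0 ξ₁ α Λ₂ t ≤ Λ₂ t := fun t ht =>
    (elasticFeedbackMap_le_of_tail_le hBcont hBmeas hX0meas hα.le h₂.1.1 hξ₁.1 hξ₂.1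
      (hindepX0ξ₁.indepFun_prodMk_of_indepFun_prodMk hX0meas hξ₁.1 hBpath hindepB₁)
      (hindepX0ξ₂.indepFun_prodMk_of_indepFun_prodMk hX0meas hξ₂.1 hBpath hindepB₂)
      (fun _ hx => hξ₁.measure_lt_le hξ₂ hκ₁₂.le hx) ht).trans (h₂.1.2 t ht).ge
  obtain ⟨Λ, hΛ, hfix, hΛle⟩ := exists_isLossFn_fixedPoint_le
    (fun _ _ hΛ' hle => elasticFeedbackMap_mono hBcont hα.le hΛ'.1 hle)
    (fun _ hΛ => isLossFn_elasticFeedbackMap hBcont hBmeas hX0meas hξ₁.1 hα.le hΛ)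
    h₂.1.1 hsuper
  exact fun t ht => (h₁.2 Λ ⟨hΛ, hfix⟩ t ht).trans (hΛle t)

/-- for `0 < κ₁ < κ₂`, the minimal solutions of the elastic feedback problem
satisfy `Λ^{κ₁}_t ≤ Λ^{κ₂}_t` for all `t ≥ 0`. -/
theorem statement_11 {Ω : Type*} [MeasurableSpace Ω] (P : Measure Ω) [IsProbabilityMeasure P]
    (α κ₁ κ₂ : ℝ) (hα : 0 < α) (hκ₁ : 0 < κ₁) (hκ₁₂ : κ₁ < κ₂)
    (B : ℝ → Ω → ℝ) (X0 ξ₁ ξ₂ : Ω → ℝ)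
    (hB : IsStandardBM P B)
    (hX0meas : Measurable X0) (hX0nonneg : ∀ ω, 0 ≤ X0 ω)
    (hξ₁ : IsExponential P κ₁ ξ₁) (hξ₂ : IsExponential P κ₂ ξ₂)
    (hindepX0ξ₁ : IndepFun X0 ξ₁ P) (hindepX0ξ₂ : IndepFun X0 ξ₂ P)
    (hindepB₁ : IndepFun (fun ω => (X0 ω, ξ₁ ω)) (fun ω => fun t => B t ω) P)
    (hindepB₂ : IndepFun (fun ω => (X0 ω, ξ₂ ω)) (fun ω => fun t => B t ω) P)
    (Λ₁ Λ₂ : ℝ → ℝ)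
    (h₁ : IsMinimalElasticSol P B X0 ξ₁ α Λ₁)
    (h₂ : IsMinimalElasticSol P B X0 ξ₂ α Λ₂) :
    ∀ t : ℝ, 0 ≤ t → Λ₁ t ≤ Λ₂ t :=
  statement_11_general P α κ₁ κ₂ hα hκ₁₂ B X0 ξ₁ ξ₂ hB hX0meas hξ₁ hξ₂ hindepX0ξ₁ hindepX0ξ₂
    hindepB₁ hindepB₂ Λ₁ Λ₂ h₁ h₂

end
end
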